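/- arXiv:1604.05889 — 2 statements merged into one kernel-verified Lean document; each statement's English description precedes it below -/
import Mathlib

section
/- Let G be a finitely generated abelian group, r ≥ 1, and let H, K be subgroups of torsion-free rank exactly r with the same maximal rank-r subgroup containing them (the maximal subgroups of rank r containing H and K coincide). Then rank(H ∩ K) = r. -/
/-!
Torsion-free rank is additive in the sense `rk (H ⊔ K) + rk (H ⊓ K) = rk H + rk K`. Since
`H ⊔ K ≤ M` has rank at most `r`, this forces `rk (H ⊓ K) ≥ r`.
-/

open scoped TensorProduct

/-- The torsion-free rank of an abelian group `A`: the dimension of `ℚ ⊗ A` over `ℚ`. -/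
noncomputable def tfRank (A : Type*) [AddCommGroup A] : Cardinal :=
  Module.rank ℚ (ℚ ⊗[ℤ] A)

theorem Cardinal.eq_of_add_eq_add_of_le {a b : Cardinal} {n : ℕ} (h : a + b = n + n)
    (ha : a ≤ n) (hb : b ≤ n) : b = n := by
  obtain ⟨k, rfl⟩ := Cardinal.lt_aleph0.1 (ha.trans_lt Cardinal.natCast_lt_aleph0)
  obtain ⟨m, rfl⟩ := Cardinal.lt_aleph0.1 (hb.trans_lt Cardinal.natCast_lt_aleph0)
  norm_cast at h ha hb ⊢
  omega

theorem tfRank_eq_rank_int (A : Type*) [AddCommGroup A] : tfRank A = Module.rank ℤ A :=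
  (TensorProduct.isBaseChange ℤ A ℚ).rank_eq

section AddSubgroup

variable {G : Type*} [AddCommGroup G]

theorem tfRank_mono {H K : AddSubgroup G} (h : H ≤ K) : tfRank H ≤ tfRank K := by
  rw [tfRank_eq_rank_int, tfRank_eq_rank_int]
  exact Submodule.rank_mono (s := H.toIntSubmodule) (t := K.toIntSubmodule) h

theorem tfRank_sup_add_tfRank_inf (H K : AddSubgroup G) :
    tfRank ↥(H ⊔ K) + tfRank ↥(H ⊓ K) = tfRank H + tfRank K := by
  simp only [tfRank_eq_rank_int]
  have := Submodule.rank_sup_add_rank_inf_eq H.toIntSubmodule K.toIntSubmodule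
  rwa [← map_sup, ← map_inf] at this

end AddSubgroup

theorem rank_inter_of_eq_max_general (G : Type*) [AddCommGroup G]
    (r : ℕ) (H K M : AddSubgroup G)
    (hH : tfRank H = r) (hK : tfRank K = r) (hM : tfRank M = r)
    (hHM : H ≤ M) (hKM : K ≤ M) :
    tfRank ↥(H ⊓ K) = r := by
  have hsup : tfRank ↥(H ⊔ K) ≤ r := hM ▸ tfRank_mono (sup_le hHM hKM)
  have hinf : tfRank ↥(H ⊓ K) ≤ r := hH ▸ tfRank_mono inf_le_left
  have hsum := tfRank_sup_add_tfRank_inf H K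
  rw [hH, hK] at hsum
  exact Cardinal.eq_of_add_eq_add_of_le hsum hsup hinf

theorem rank_inter_of_eq_max (G : Type*) [AddCommGroup G] [AddGroup.FG G]
    (r : ℕ) (hr : 1 ≤ r) (H K M : AddSubgroup G)
    (hH : tfRank H = r) (hK : tfRank K = r) (hM : tfRank M = r)
    (hHM : H ≤ M) (hKM : K ≤ M)
    (hmax : ∀ J : AddSubgroup G, tfRank J = r → M ≤ J → J = M) :
    tfRank ↥(H ⊓ K) = r :=
  rank_inter_of_eq_max_general G r H K M hH hK hM hHM hKM
end

section
/- Let G be a finitely generated abelian group and H, K subgroups of torsion-free rank exactly r ≥ 1 with rank(H ∩ K) = r. Then the unique maximal rank-r subgroups containing H and K coincide: H_max = K_max. -/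
/-!
Tensoring with the flat `ℤ`-module `ℚ` identifies the torsion-free rank of a subgroup with the
dimension of its `ℚ`-span in `ℚ ⊗ G`, and turns sums of subgroups into sums of spans. The dimension
formula for subspaces then shows that `MH ⊔ MK` has rank `r`, because `MH ⊓ MK ⊇ H ⊓ K` already
has rank `r`; by maximality `MH ⊔ MK` equals both `MH` and `MK`.
-/

open scoped TensorProduct

namespace Submodule

theorem baseChange_sup {R M : Type*} (A : Type*) [CommSemiring R] [Semiring A] [Algebra R A]
    [AddCommMonoid M] [Module R M] (p q : Submodule R M) :
    (p ⊔ q).baseChange A = p.baseChange A ⊔ q.baseChange A := by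
  rw [← span_eq p, ← span_eq q, ← span_union, baseChange_span, baseChange_span, baseChange_span,
    Set.image_union, span_union]

end Submodule

namespace AddSubgroup

variable {G : Type*} [AddCommGroup G]

noncomputable def ratSpan (H : AddSubgroup G) : Submodule ℚ (ℚ ⊗[ℤ] G) :=
  H.toIntSubmodule.baseChange ℚ

theorem ratSpan_mono : Monotone (ratSpan (G := G)) := fun _ _ h =>
  Submodule.baseChange_mono ℚ (AddSubgroup.toIntSubmodule.monotone h)

theorem ratSpan_sup (H K : AddSubgroup G) : ratSpan (H ⊔ K) = ratSpan H ⊔ ratSpan K := by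
  rw [ratSpan, ratSpan, ratSpan, ← Submodule.baseChange_sup]
  exact congrArg _ (toIntSubmodule.map_sup H K)

theorem tfRank_eq_rank_ratSpan (H : AddSubgroup G) : tfRank H = Module.rank ℚ (ratSpan H) :=
  (Submodule.toBaseChange.toLinearEquiv ℚ H.toIntSubmodule).rank_eq

theorem tfRank_mono {H K : AddSubgroup G} (h : H ≤ K) : tfRank H ≤ tfRank K := by
  rw [tfRank_eq_rank_ratSpan, tfRank_eq_rank_ratSpan]
  exact Submodule.rank_mono (ratSpan_mono h)

theorem tfRank_sup_add_tfRank_inf_le (H K : AddSubgroup G) :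
    tfRank ↥(H ⊔ K) + tfRank ↥(H ⊓ K) ≤ tfRank H + tfRank K := by
  simp only [tfRank_eq_rank_ratSpan]
  rw [ratSpan_sup, ← Submodule.rank_sup_add_rank_inf_eq H.ratSpan K.ratSpan]
  exact add_le_add le_rfl (Submodule.rank_mono (ratSpan_mono.map_inf_le H K))

theorem tfRank_sup_eq {H K : AddSubgroup G} {n : ℕ} (hH : tfRank H = n) (hK : tfRank K = n)
    (hHK : n ≤ tfRank ↥(H ⊓ K)) : tfRank ↥(H ⊔ K) = n := by
  refine le_antisymm ?_ (hH ▸ tfRank_mono le_sup_left)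
  rw [← Cardinal.add_le_add_iff_of_lt_aleph0 (Cardinal.natCast_lt_aleph0 (n := n))]
  calc tfRank ↥(H ⊔ K) + n ≤ tfRank ↥(H ⊔ K) + tfRank ↥(H ⊓ K) := by gcongr
    _ ≤ tfRank H + tfRank K := tfRank_sup_add_tfRank_inf_le H K
    _ = n + n := by rw [hH, hK]

end AddSubgroup

theorem max_eq_of_rank_inter_general (G : Type*) [AddCommGroup G]
    (r : ℕ) (H K MH MK : AddSubgroup G)
    (hHK : tfRank ↥(H ⊓ K) = r)
    (hMH : tfRank MH = r) (hHMH : H ≤ MH)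
    (hMHmax : ∀ J : AddSubgroup G, tfRank J = r → MH ≤ J → J = MH)
    (hMK : tfRank MK = r) (hKMK : K ≤ MK)
    (hMKmax : ∀ J : AddSubgroup G, tfRank J = r → MK ≤ J → J = MK) :
    MH = MK := by
  have hinf : r ≤ tfRank ↥(MH ⊓ MK) := hHK ▸ AddSubgroup.tfRank_mono (inf_le_inf hHMH hKMK)
  have hsup : tfRank ↥(MH ⊔ MK) = r := AddSubgroup.tfRank_sup_eq hMH hMK hinf
  exact (hMHmax _ hsup le_sup_left).symm.trans (hMKmax _ hsup le_sup_right)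

theorem max_eq_of_rank_inter (G : Type*) [AddCommGroup G] [AddGroup.FG G]
    (r : ℕ) (hr : 1 ≤ r) (H K MH MK : AddSubgroup G)
    (hH : tfRank H = r) (hK : tfRank K = r)
    (hHK : tfRank ↥(H ⊓ K) = r)
    (hMH : tfRank MH = r) (hHMH : H ≤ MH)
    (hMHmax : ∀ J : AddSubgroup G, tfRank J = r → MH ≤ J → J = MH)
    (hMK : tfRank MK = r) (hKMK : K ≤ MK)
    (hMKmax : ∀ J : AddSubgroup G, tfRank J = r → MK ≤ J → J = MK) :
    MH = MK :=
  max_eq_of_rank_inter_general G r H K MH MK hHK hMH hHMH hMHmax hMK hKMK hMKmax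
end
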